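/- Let A be a ring with a nilpotent two-sided ideal a such that gr_a(A) is commutative, let s ∈ A, and let A_s be the Ore ring of fractions of A with respect to the denominator set {s^j : j ≥ 0}. Let Ā := A/a, with s̄ ∈ Ā the image of s, and let Ā_{s̄} be the localization of the commutative ring Ā at s̄. Then an element a ∈ A is invertible in A_s if and only if its image ā ∈ Ā is invertible in Ā_{s̄}. -/
import Mathlib


universe u

/-- The powers of a subset `S` of a ring: `S^0 = ⊤` (everything), and `S^{n+1}` is the
additive subgroup generated by products `y·z` with `y ∈ S^n` and `z ∈ S`.  For `S` the
underlying set of a two-sided ideal `𝔞` this is the usual power `𝔞^n` (as an additive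
subgroup). -/
def setPow {A : Type u} [Ring A] (S : Set A) : ℕ → AddSubgroup A
  | 0 => ⊤
  | n + 1 => AddSubgroup.closure {w | ∃ y ∈ setPow S n, ∃ z ∈ S, w = y * z}

set_option linter.unusedSectionVars false
set_option linter.unnecessarySimpa false

section Aux

variable {A : Type u} [Ring A] {a : TwoSidedIdeal A}

lemma setPow_succ (S : Set A) (n : ℕ) :
    setPow S (n + 1) = AddSubgroup.closure {w | ∃ y ∈ setPow S n, ∃ z ∈ S, w = y * z} := rfl

lemma mem_setPow_one {x : A} (hx : x ∈ a) : x ∈ setPow (a : Set A) 1 := by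
  rw [setPow_succ]
  exact AddSubgroup.subset_closure ⟨1, AddSubgroup.mem_top 1, x, hx, (one_mul x).symm⟩

lemma setPow_mul_mem {n : ℕ} {x z : A} (hx : x ∈ setPow (a : Set A) n) (hz : z ∈ a) :
    x * z ∈ setPow (a : Set A) (n + 1) := by
  rw [setPow_succ]
  exact AddSubgroup.subset_closure ⟨x, hx, z, hz, rfl⟩

lemma setPow_mul_right {n : ℕ} {x : A} (hx : x ∈ setPow (a : Set A) (n + 1)) (t : A) :
    x * t ∈ setPow (a : Set A) (n + 1) := by
  rw [setPow_succ] at hx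
  refine AddSubgroup.closure_induction
    (p := fun w _ => w * t ∈ setPow (a : Set A) (n + 1)) ?_ ?_ ?_ ?_ hx
  · rintro w ⟨y, hy, z, hz, rfl⟩
    rw [mul_assoc]
    exact setPow_mul_mem hy (a.mul_mem_right _ _ hz)
  · simpa using (setPow (a : Set A) (n + 1)).zero_mem
  · intro p q _ _ hp hq
    rw [add_mul]; exact add_mem hp hq
  · intro p _ hp
    rw [neg_mul]; exact neg_mem hp

lemma setPow_mul_left {n : ℕ} {x : A} (hx : x ∈ setPow (a : Set A) n) (t : A) :
    t * x ∈ setPow (a : Set A) n := by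
  induction n generalizing x t with
  | zero => exact AddSubgroup.mem_top _
  | succ n ih =>
    rw [setPow_succ] at hx
    refine AddSubgroup.closure_induction
      (p := fun w _ => t * w ∈ setPow (a : Set A) (n + 1)) ?_ ?_ ?_ ?_ hx
    · rintro w ⟨y, hy, z, hz, rfl⟩
      rw [← mul_assoc]
      exact setPow_mul_mem (ih hy t) hz
    · simpa using (setPow (a : Set A) (n + 1)).zero_mem
    · intro p q _ _ hp hq
      rw [mul_add]; exact add_mem hp hq
    · intro p _ hp
      rw [mul_neg]; exact neg_mem hp

lemma setPow_succ_le (n : ℕ) :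
    setPow (a : Set A) (n + 1) ≤ setPow (a : Set A) n := by
  intro x hx
  cases n with
  | zero => exact AddSubgroup.mem_top _
  | succ n =>
    rw [setPow_succ] at hx
    refine AddSubgroup.closure_induction
      (p := fun w _ => w ∈ setPow (a : Set A) (n + 1)) ?_ ?_ ?_ ?_ hx
    · rintro w ⟨y, hy, z, _, rfl⟩
      exact setPow_mul_right hy z
    · exact zero_mem _
    · intro p q _ _ hp hq; exact add_mem hp hq
    · intro p _ hp; exact neg_mem hp

lemma setPow_le {m n : ℕ} (h : m ≤ n) :
    setPow (a : Set A) n ≤ setPow (a : Set A) m := by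
  induction n with
  | zero => simpa [Nat.le_zero.mp h] using le_refl _
  | succ n ih =>
    rcases Nat.lt_or_ge m (n + 1) with h' | h'
    · exact le_trans (setPow_succ_le n) (ih (Nat.lt_succ_iff.mp h'))
    · have : m = n + 1 := le_antisymm h h'
      subst this; exact le_refl _

lemma setPow_mul {k l : ℕ} {x y : A} (hx : x ∈ setPow (a : Set A) k)
    (hy : y ∈ setPow (a : Set A) l) : x * y ∈ setPow (a : Set A) (k + l) := by
  induction l generalizing y with
  | zero =>
    cases k with
    | zero => exact AddSubgroup.mem_top _
    | succ k => exact setPow_mul_right hx y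
  | succ l ih =>
    rw [setPow_succ] at hy
    refine AddSubgroup.closure_induction
      (p := fun w _ => x * w ∈ setPow (a : Set A) (k + (l + 1))) ?_ ?_ ?_ ?_ hy
    · rintro w ⟨y', hy', z, hz, rfl⟩
      rw [← mul_assoc]
      exact setPow_mul_mem (ih hy') hz
    · simpa using (setPow (a : Set A) (k + (l + 1))).zero_mem
    · intro p q _ _ hp hq
      rw [mul_add]; exact add_mem hp hq
    · intro p _ hp
      rw [mul_neg]; exact neg_mem hp

end Aux

section OreSide

variable {A : Type u} [Ring A] (a : TwoSidedIdeal A) (s : A)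
  [OreLocalization.OreSet (Submonoid.powers s)]

noncomputable def sUnit : (OreLocalization (Submonoid.powers s) A)ˣ :=
  OreLocalization.numeratorUnit ⟨s, 1, pow_one s⟩

local notation "R'" => OreLocalization (Submonoid.powers s) A
local notation "φ" => (OreLocalization.numeratorRingHom : A →+* OreLocalization (Submonoid.powers s) A)
local notation "uinv" => (((sUnit s)⁻¹ : (OreLocalization (Submonoid.powers s) A)ˣ) : OreLocalization (Submonoid.powers s) A)

lemma sUnit_val : ((sUnit s : (OreLocalization (Submonoid.powers s) A)ˣ) : R') = φ s := rfl

noncomputable def TT (k : ℕ) : AddSubgroup (OreLocalization (Submonoid.powers s) A) :=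
  AddSubgroup.closure {w | ∃ x ∈ setPow (a : Set A) k, ∃ m : ℕ, w = φ x * uinv ^ m}

lemma mem_TT {k : ℕ} {x : A} (hx : x ∈ setPow (a : Set A) k) (m : ℕ) :
    φ x * uinv ^ m ∈ TT a s k :=
  AddSubgroup.subset_closure ⟨x, hx, m, rfl⟩

lemma TT_induction {k : ℕ} {p : R' → Prop}
    (mem : ∀ x ∈ setPow (a : Set A) k, ∀ m : ℕ, p (φ x * uinv ^ m))
    (zero : p 0) (add : ∀ ξ η, p ξ → p η → p (ξ + η)) (neg : ∀ ξ, p ξ → p (-ξ))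
    {ξ : R'} (hξ : ξ ∈ TT a s k) : p ξ := by
  refine AddSubgroup.closure_induction (p := fun w _ => p w) ?_ zero
    (fun x y _ _ hx hy => add x y hx hy) (fun x _ hx => neg x hx) hξ
  rintro w ⟨x, hx, m, rfl⟩
  exact mem x hx m

lemma TT_mono {k l : ℕ} (h : k ≤ l) : TT a s l ≤ TT a s k := by
  intro ξ hξ
  refine TT_induction a s (fun x hx m => mem_TT a s (setPow_le h hx) m)
    (zero_mem _) (fun _ _ h1 h2 => add_mem h1 h2) (fun _ h1 => neg_mem h1) hξ

lemma TT_mul_uinv {k : ℕ} {ξ : R'} (hξ : ξ ∈ TT a s k) : ξ * uinv ∈ TT a s k := by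
  refine TT_induction a s (p := fun ξ => ξ * uinv ∈ TT a s k) ?_ ?_ ?_ ?_ hξ
  · intro x hx m
    rw [mul_assoc, ← pow_succ]
    exact mem_TT a s hx (m + 1)
  · show (0 : OreLocalization (Submonoid.powers s) A) * uinv ∈ TT a s k
    rw [zero_mul]; exact zero_mem _
  · intro ξ η h1 h2
    show (ξ + η) * uinv ∈ TT a s k
    rw [add_mul]; exact add_mem h1 h2
  · intro ξ h1
    show (-ξ) * uinv ∈ TT a s k
    rw [neg_mul]; exact neg_mem h1

lemma key_comm
    (hgr : ∀ (i j : ℕ) (x y : A), x ∈ setPow (a : Set A) i → y ∈ setPow (a : Set A) j →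
      x * y - y * x ∈ setPow (a : Set A) (i + j + 1))
    {N : ℕ} (hN : setPow (a : Set A) N = ⊥) :
    ∀ (j k : ℕ), N ≤ j + k → ∀ x ∈ setPow (a : Set A) k, uinv * φ x ∈ TT a s k := by
  intro j
  induction j with
  | zero =>
    intro k hk x hx
    have hx0 : x = 0 := by
      have := setPow_le (a := a) (by simpa using hk) hx
      rw [hN] at this
      simpa using this
    rw [hx0, map_zero, mul_zero]
    exact zero_mem _
  | succ j ih =>
    intro k hk x hx
    set c := s * x - x * s with hc
    have hcmem : c ∈ setPow (a : Set A) (k + 1) := by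
      have := hgr 0 k s x (AddSubgroup.mem_top s) hx
      rwa [Nat.zero_add] at this
    have h2 : ((sUnit s : (OreLocalization (Submonoid.powers s) A)ˣ) : R') * (φ x * uinv)
        = φ x + φ c * uinv := by
      rw [← mul_assoc]
      have h4 : ((sUnit s : (OreLocalization (Submonoid.powers s) A)ˣ) : R') * φ x
          = φ (x * s) + φ c := by
        rw [sUnit_val, ← map_mul, ← map_add]
        congr 1
        rw [hc]; abel
      rw [h4, add_mul, map_mul, mul_assoc, ← sUnit_val, Units.mul_inv, mul_one]
    have h3 := congrArg (fun z => uinv * z) h2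
    simp only [Units.inv_mul_cancel_left, mul_add] at h3
    have h1 : uinv * φ x = φ x * uinv - uinv * φ c * uinv := by
      rw [h3, ← mul_assoc]
      abel
    rw [h1]
    have hgen : φ x * uinv ∈ TT a s k := by
      have := mem_TT a s hx 1
      rwa [pow_one] at this
    have hrec : uinv * φ c ∈ TT a s (k + 1) :=
      ih (k + 1) (by omega) c hcmem
    exact sub_mem hgen (TT_mono a s (Nat.le_succ k) (TT_mul_uinv a s hrec))

variable {a s}
variable (hgr : ∀ (i j : ℕ) (x y : A), x ∈ setPow (a : Set A) i → y ∈ setPow (a : Set A) j →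
      x * y - y * x ∈ setPow (a : Set A) (i + j + 1))
    {N : ℕ} (hN : setPow (a : Set A) N = ⊥)

include hgr hN

lemma TT_uinv_mul {k : ℕ} {ξ : OreLocalization (Submonoid.powers s) A}
    (hξ : ξ ∈ TT a s k) : uinv * ξ ∈ TT a s k := by
  refine TT_induction a s (p := fun ξ => uinv * ξ ∈ TT a s k) ?_ ?_ ?_ ?_ hξ
  · intro x hx m
    show uinv * (φ x * uinv ^ m) ∈ TT a s k
    rw [← mul_assoc]
    have h1 : uinv * φ x ∈ TT a s k := key_comm a s hgr hN N k (Nat.le_add_right N k) x hx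
    induction m with
    | zero => rw [pow_zero, mul_one]; exact h1
    | succ m ihm =>
      rw [pow_succ, ← mul_assoc]
      exact TT_mul_uinv a s ihm
  · show uinv * (0 : OreLocalization (Submonoid.powers s) A) ∈ TT a s k
    rw [mul_zero]; exact zero_mem _
  · intro ξ η h1 h2
    show uinv * (ξ + η) ∈ TT a s k
    rw [mul_add]; exact add_mem h1 h2
  · intro ξ h1
    show uinv * (-ξ) ∈ TT a s k
    rw [mul_neg]; exact neg_mem h1

lemma TT_uinv_pow_mul {k : ℕ} (m : ℕ) {ξ : OreLocalization (Submonoid.powers s) A}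
    (hξ : ξ ∈ TT a s k) : uinv ^ m * ξ ∈ TT a s k := by
  induction m with
  | zero => rw [pow_zero, one_mul]; exact hξ
  | succ m ihm =>
    rw [pow_succ', mul_assoc]
    exact TT_uinv_mul hgr hN ihm

lemma TT_phi_mul {k l : ℕ} {x : A} (hx : x ∈ setPow (a : Set A) k)
    {ξ : OreLocalization (Submonoid.powers s) A} (hξ : ξ ∈ TT a s l) :
    φ x * ξ ∈ TT a s (k + l) := by
  refine TT_induction a s (p := fun ξ => φ x * ξ ∈ TT a s (k + l)) ?_ ?_ ?_ ?_ hξ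
  · intro y hy m
    show φ x * (φ y * uinv ^ m) ∈ TT a s (k + l)
    rw [← mul_assoc, ← map_mul]
    exact mem_TT a s (setPow_mul hx hy) m
  · show φ x * (0 : OreLocalization (Submonoid.powers s) A) ∈ TT a s (k + l)
    rw [mul_zero]; exact zero_mem _
  · intro ξ η h1 h2
    show φ x * (ξ + η) ∈ TT a s (k + l)
    rw [mul_add]; exact add_mem h1 h2
  · intro ξ h1
    show φ x * (-ξ) ∈ TT a s (k + l)
    rw [mul_neg]; exact neg_mem h1

lemma TT_mul {k l : ℕ} {ξ η : OreLocalization (Submonoid.powers s) A}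
    (hξ : ξ ∈ TT a s k) (hη : η ∈ TT a s l) : ξ * η ∈ TT a s (k + l) := by
  refine TT_induction a s (p := fun ξ => ξ * η ∈ TT a s (k + l)) ?_ ?_ ?_ ?_ hξ
  · intro x hx m
    show φ x * uinv ^ m * η ∈ TT a s (k + l)
    rw [mul_assoc]
    exact TT_phi_mul hgr hN hx (TT_uinv_pow_mul hgr hN m hη)
  · show (0 : OreLocalization (Submonoid.powers s) A) * η ∈ TT a s (k + l)
    rw [zero_mul]; exact zero_mem _
  · intro ξ' η' h1 h2
    show (ξ' + η') * η ∈ TT a s (k + l)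
    rw [add_mul]; exact add_mem h1 h2
  · intro ξ' h1
    show (-ξ') * η ∈ TT a s (k + l)
    rw [neg_mul]; exact neg_mem h1

lemma TT_nilpotent (hN1 : 1 ≤ N) {ξ : OreLocalization (Submonoid.powers s) A}
    (hξ : ξ ∈ TT a s 1) : ξ ^ N = 0 := by
  have hpow : ∀ n : ℕ, ξ ^ (n + 1) ∈ TT a s (n + 1) := by
    intro n
    induction n with
    | zero => rw [pow_one]; exact hξ
    | succ n ihn =>
      rw [pow_succ]
      exact TT_mul hgr hN ihn hξ
  obtain ⟨N', rfl⟩ : ∃ N', N = N' + 1 := ⟨N - 1, by omega⟩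
  have hmem := hpow N'
  have hbot : TT a s (N' + 1) ≤ ⊥ := by
    intro w hw
    refine TT_induction a s (p := fun w => w ∈ (⊥ : AddSubgroup (OreLocalization (Submonoid.powers s) A))) ?_ ?_ ?_ ?_ hw
    · intro x hx m
      have hx0 : x = 0 := by rw [hN] at hx; simpa using hx
      rw [hx0, map_zero, zero_mul]
      exact zero_mem _
    · exact zero_mem _
    · intro _ _ h1 h2; exact add_mem h1 h2
    · intro _ h1; exact neg_mem h1
  simpa using hbot hmem

end OreSide

section CanonicalMap

variable {A : Type u} [Ring A] (s : A) [OreLocalization.OreSet (Submonoid.powers s)]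
variable (B : Type u) [CommRing B] (π : A →+* B)

/-- Each power of `s` maps to a unit of the (commutative) localization
`B̄_{s̄} = B[(π s)⁻¹]`. -/
noncomputable def powersToUnits :
    (Submonoid.powers s) →* (Localization (Submonoid.powers (π s)))ˣ where
  toFun t :=
    (IsLocalization.map_units (M := Submonoid.powers (π s))
      (Localization (Submonoid.powers (π s)))
      ⟨π t, by
        obtain ⟨n, hn⟩ := t.2
        exact ⟨n, by rw [← hn, map_pow]⟩⟩).unit
  map_one' := Units.ext (by simp)
  map_mul' x y := Units.ext (by simp)

/-- The canonical ring homomorphism `A_s → B̄_{s̄}` from the Ore localization of `A` at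
the powers of `s` to the localization of `B̄ = A/𝔞` at the image of `s`; it is induced
by `π : A → B̄` via the universal property of the Ore localization. -/
noncomputable def canonicalToLoc :
    OreLocalization (Submonoid.powers s) A →+* Localization (Submonoid.powers (π s)) :=
  OreLocalization.universalHom
    ((algebraMap B (Localization (Submonoid.powers (π s)))).comp π)
    (powersToUnits s B π)
    (fun t => by simp [powersToUnits])

end CanonicalMap

lemma isUnit_of_mul_both {M : Type*} [Monoid M] {r c : M}
    (h1 : IsUnit (r * c)) (h2 : IsUnit (c * r)) : IsUnit r := by
  obtain ⟨v1, hv1⟩ := h1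
  obtain ⟨v2, hv2⟩ := h2
  have hrx : r * (c * ↑v1⁻¹) = 1 := by rw [← mul_assoc, ← hv1, Units.mul_inv]
  have hyr : (↑v2⁻¹ * c) * r = 1 := by rw [mul_assoc, ← hv2, Units.inv_mul]
  have hxy : c * ↑v1⁻¹ = ↑v2⁻¹ * c := by
    calc c * ↑v1⁻¹ = ((↑v2⁻¹ * c) * r) * (c * ↑v1⁻¹) := by rw [hyr, one_mul]
    _ = (↑v2⁻¹ * c) * (r * (c * ↑v1⁻¹)) := by rw [mul_assoc]
    _ = ↑v2⁻¹ * c := by rw [hrx, mul_one]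
  exact ⟨⟨r, c * ↑v1⁻¹, hrx, by rw [hxy]; exact hyr⟩, rfl⟩


/-- Let `A` be a ring with a nilpotent two-sided ideal `𝔞` such that
`gr_𝔞(A)` is commutative, let `s ∈ A`, and let `A_s` be the Ore ring of fractions of `A`
with respect to the denominator set `{s^j}`.  Let `B̄ := A/𝔞` (encoded as a commutative
ring `B` with a surjective homomorphism `π : A → B` whose kernel is `𝔞`), with `s̄ := π s`
the image of `s`, and let `B̄_{s̄}` be the localization of `B̄` at `s̄`.  Then an element
`r ∈ A` is invertible in `A_s` if and only if its image `π r` is invertible in `B̄_{s̄}`. -/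
theorem stmt_3 {A : Type u} [Ring A] (a : TwoSidedIdeal A)
    (hnil : ∃ n : ℕ, setPow (a : Set A) n = ⊥)
    (hgr : ∀ (i j : ℕ) (x y : A), x ∈ setPow (a : Set A) i → y ∈ setPow (a : Set A) j →
      x * y - y * x ∈ setPow (a : Set A) (i + j + 1))
    (s : A) [OreLocalization.OreSet (Submonoid.powers s)]
    (B : Type u) [CommRing B] (π : A →+* B) (hπsurj : Function.Surjective π)
    (hπker : ∀ x : A, π x = 0 ↔ x ∈ a) :
    ∀ r : A,
      IsUnit (OreLocalization.numeratorRingHom r :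
          OreLocalization (Submonoid.powers s) A) ↔
        IsUnit (algebraMap B (Localization (Submonoid.powers (π s))) (π r)) := by
  intro r
  constructor
  · intro h
    have h2 := h.map (canonicalToLoc s B π)
    have h3 : canonicalToLoc s B π (OreLocalization.numeratorRingHom r)
        = algebraMap B (Localization (Submonoid.powers (π s))) (π r) :=
      OreLocalization.universalHom_commutes
        (f := (algebraMap B (Localization (Submonoid.powers (π s)))).comp π)
        (fS := powersToUnits s B π)
        (hf := fun t => by simp [powersToUnits]) (r := r)
    rwa [h3] at h2
  · intro h
    obtain ⟨N₀, hN₀⟩ := hnil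
    obtain ⟨N, hN1, hNbot⟩ : ∃ N, 1 ≤ N ∧ setPow (a : Set A) N = ⊥ := by
      refine ⟨max N₀ 1, le_max_right _ _, le_antisymm ?_ bot_le⟩
      rw [← hN₀]
      exact setPow_le (le_max_left _ _)
    obtain ⟨v, hv⟩ := h
    obtain ⟨⟨b, t⟩, hbt⟩ := IsLocalization.surj (M := Submonoid.powers (π s))
      (↑v⁻¹ : Localization (Submonoid.powers (π s)))
    have key : algebraMap B (Localization (Submonoid.powers (π s))) (π r * b)
        = algebraMap B (Localization (Submonoid.powers (π s))) (↑t : B) := by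
      rw [map_mul, ← hv, ← hbt, Units.mul_inv_cancel_left]
    obtain ⟨d, hd⟩ := (IsLocalization.eq_iff_exists (Submonoid.powers (π s))
      (Localization (Submonoid.powers (π s)))).mp key
    obtain ⟨p, hp'⟩ := d.2
    obtain ⟨m, hm'⟩ := t.2
    have hp : π s ^ p = (d : B) := hp'
    have hm : π s ^ m = (t : B) := hm'
    obtain ⟨c₀, hc₀⟩ := hπsurj b
    set q := p + m with hq
    set C := c₀ * s ^ p with hC
    have hd' : π s ^ p * (π r * b) = π s ^ p * π s ^ m := by rw [hp, hm]; exact hd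
    have hπrC : π (r * C) = π (s ^ q) := by
      rw [map_mul, hC, map_mul, hc₀, map_pow, map_pow, hq, pow_add]
      linear_combination hd'
    have hx : r * C - s ^ q ∈ a := (hπker _).mp (by rw [map_sub, hπrC, sub_self])
    have hy : C * r - s ^ q ∈ a := (hπker _).mp (by
      rw [map_sub, map_mul, mul_comm (π C) (π r), ← map_mul, hπrC, sub_self])
    have hu : ∀ d : A, d ∈ a → IsUnit (OreLocalization.numeratorRingHom (s ^ q + d) :
        OreLocalization (Submonoid.powers s) A) := by
      intro e he
      set w : (OreLocalization (Submonoid.powers s) A)ˣ := (sUnit s) ^ q with hw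
      have hwval : (↑w : OreLocalization (Submonoid.powers s) A)
          = OreLocalization.numeratorRingHom (s ^ q) := by
        rw [hw, Units.val_pow_eq_pow_val, sUnit_val, ← map_pow]
      have hnil' : IsNilpotent ((↑w⁻¹ : OreLocalization (Submonoid.powers s) A) *
          OreLocalization.numeratorRingHom e) := by
        refine ⟨N, TT_nilpotent hgr hNbot hN1 ?_⟩
        have h0 := mem_TT a s (mem_setPow_one he) 0
        rw [pow_zero, mul_one] at h0
        have h5 := TT_uinv_pow_mul hgr hNbot q h0
        have hwinv : (↑w⁻¹ : OreLocalization (Submonoid.powers s) A)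
            = (↑(sUnit s)⁻¹ : OreLocalization (Submonoid.powers s) A) ^ q := by
          rw [hw, ← inv_pow, Units.val_pow_eq_pow_val]
        rwa [hwinv]
      have heq : (OreLocalization.numeratorRingHom (s ^ q + e) :
            OreLocalization (Submonoid.powers s) A)
          = (↑w : OreLocalization (Submonoid.powers s) A) *
            (1 + (↑w⁻¹ : OreLocalization (Submonoid.powers s) A) *
              OreLocalization.numeratorRingHom e) := by
        rw [mul_add, mul_one, Units.mul_inv_cancel_left, map_add, hwval]
      rw [heq]
      exact w.isUnit.mul (IsNilpotent.isUnit_one_add hnil')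
    have hur : IsUnit (OreLocalization.numeratorRingHom r *
        OreLocalization.numeratorRingHom C : OreLocalization (Submonoid.powers s) A) := by
      have h6 := hu (r * C - s ^ q) hx
      rwa [show s ^ q + (r * C - s ^ q) = r * C by abel, map_mul] at h6
    have hul : IsUnit (OreLocalization.numeratorRingHom C *
        OreLocalization.numeratorRingHom r : OreLocalization (Submonoid.powers s) A) := by
      have h6 := hu (C * r - s ^ q) hy
      rwa [show s ^ q + (C * r - s ^ q) = C * r by abel, map_mul] at h6
    exact isUnit_of_mul_both hur hul
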